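/- arXiv:1404.1206 — 2 statements merged into one kernel-verified Lean document; each statement's English description precedes it below -/
import Mathlib

section
/- Let G ~ G(n,p), F a graph without isolated vertices with 3 ≤ v(F) = t ≤ k, and fix a pair ij of vertices. Define S_{ij}(F,G) = S(F, G ∪ {ij}) − S(F, G \ {ij}). Then E[S_{ij}(F,G)] = 0 and E[S_{ij}(F,G)^2] ≤ k^2 · p^{e(F)−1} · n^{t−2}. -/
open scoped Classical

/-- The centered edge indicator `I_G(e) - p`. -/
noncomputable def edgeInd {n : ℕ} (G : SimpleGraph (Fin n)) (p : ℝ) (e : Sym2 (Fin n)) : ℝ :=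
  (if e ∈ G.edgeSet then (1 : ℝ) else 0) - p

/-- `S(F,G) = Σ_{F'} Π_{e ∈ E(F')} (I_G(e) − p)`, the sum over all copies `F'` of `F`
with vertex set contained in `V(G)`.  Each copy `F' = F.map f` arises from exactly
`|Aut F|` embeddings `f`, so the sum over copies equals the sum over embeddings
divided by `|Aut F|`. -/
noncomputable def Ssum {n t : ℕ} (G : SimpleGraph (Fin n)) (p : ℝ)
    (F : SimpleGraph (Fin t)) : ℝ :=
  (∑ f : Fin t ↪ Fin n, ∏ e ∈ F.edgeFinset, edgeInd G p (e.map f)) /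
    (Nat.card (F ≃g F))

/-- the single edge `K₂` -/
noncomputable def K2 : SimpleGraph (Fin 2) := ⊤
/-- the path `P₂` with two edges -/
noncomputable def P2 : SimpleGraph (Fin 3) := SimpleGraph.fromEdgeSet {s(0,1), s(1,2)}
/-- the triangle `K₃` -/
noncomputable def K3 : SimpleGraph (Fin 3) := ⊤
/-- the disjoint union of two edges `2K₂` -/
noncomputable def twoK2 : SimpleGraph (Fin 4) := SimpleGraph.fromEdgeSet {s(0,1), s(2,3)}

/-- Expectation of a graph functional over the Erdős–Rényi random graph `G(n,p)`:
every pair is an edge independently with probability `p`. -/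
noncomputable def ERexp (n : ℕ) (p : ℝ) (h : SimpleGraph (Fin n) → ℝ) : ℝ :=
  ∑ ω : Sym2 (Fin n) → Bool,
    (∏ e : Sym2 (Fin n), if ω e then p else 1 - p) *
      h (SimpleGraph.fromEdgeSet {e | ω e = true})

/-- `S_{ij}(F,G) = S(F, G ∪ {ij}) − S(F, G \ {ij})`. -/
noncomputable def Sij {n t : ℕ} (G : SimpleGraph (Fin n)) (p : ℝ) (F : SimpleGraph (Fin t))
    (i j : Fin n) : ℝ :=
  Ssum (G ⊔ SimpleGraph.fromEdgeSet {s(i,j)}) p F - Ssum (G.deleteEdges {s(i,j)}) p F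

open Finset

/-! Toggling the pair `ij` only affects the copies of `F` through `ij`, and for such a copy the
difference of its two weights is `((1 - p) - (-p)) χ_A = χ_A`, where `χ_A = ∏_{e ∈ A} (I_G(e)-p)`
runs over the other `e(F) - 1` edges `A` of the copy. In `G(n,p)` these monomials are orthogonal:
`E[χ_A χ_B] = 0` unless `A = B`, when it is `(p(1-p))^|A| ≤ p^(e(F)-1)`, and `E[χ_A] = 0` as
`e(F) ≥ 2`. Since `F` has no isolated vertices, two embeddings with the same copy differ by an
automorphism of `F`, so each `A` comes from at most `|Aut F|` embeddings; this cancels one factor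
`1 / |Aut F|` of `S_{ij}²`, and at most `t² n^(t-2)` embeddings put an edge of `F` on `ij`. -/

theorem prod_mul_prod_eq_prod_union_pow {α M : Type*} [DecidableEq α] [CommMonoid M]
    (A B : Finset α) (x : α → M) :
    (∏ e ∈ A, x e) * ∏ e ∈ B, x e =
      ∏ e ∈ A ∪ B, x e ^ ((if e ∈ A then 1 else 0) + if e ∈ B then 1 else 0) := by
  simp only [pow_add, prod_mul_distrib, pow_ite, pow_one, pow_zero, prod_ite_mem,
    union_inter_cancel_left, union_inter_cancel_right]

namespace SimpleGraph

variable {V W : Type*}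

instance [Finite V] (F : SimpleGraph V) : Finite (F ≃g F) :=
  Finite.of_injective _ RelIso.toEquiv_injective

theorem two_le_card_edgeFinset_of_forall_exists_adj [Fintype V] {F : SimpleGraph V}
    (hV : 3 ≤ Fintype.card V) (hF : ∀ v, ∃ w, F.Adj v w) : 2 ≤ #F.edgeFinset := by
  have hdeg : #(univ : Finset V) • 1 ≤ ∑ v, F.degree v :=
    card_nsmul_le_sum _ _ _ fun v _ => (F.degree_pos_iff_exists_adj v).2 (hF v)
  rw [sum_degrees_eq_twice_card_edges, card_univ, smul_eq_mul, mul_one] at hdeg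
  omega

theorem exists_iso_apply_eq_of_map_eq [Finite V] {F : SimpleGraph V} (hF : ∀ v, ∃ w, F.Adj v w)
    {f g : V ↪ W} (h : F.map f = F.map g) : ∃ σ : F ≃g F, ∀ v, f (σ v) = g v := by
  have hrange : ∀ v, ∃ u, f u = g v := by
    intro v
    obtain ⟨w, hw⟩ := hF v
    have hgvw : (F.map f).Adj (g v) (g w) := h ▸ map_adj_apply.2 hw
    obtain ⟨u, -, -, hu, -⟩ := (map_adj f F _ _).1 hgvw
    exact ⟨u, hu⟩
  choose σ hσ using hrange
  have hσinj : σ.Injective := fun a b hab => g.injective (by rw [← hσ a, ← hσ b, hab])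
  refine ⟨⟨Equiv.ofBijective σ (Finite.injective_iff_bijective.1 hσinj), ?_⟩, hσ⟩
  intro a b
  rw [Equiv.ofBijective_apply, Equiv.ofBijective_apply, ← map_adj_apply (f := f), hσ, hσ, h,
    map_adj_apply]

theorem card_filter_map_eq_le_card_iso [Fintype V] [Fintype W] {F : SimpleGraph V}
    (hF : ∀ v, ∃ w, F.Adj v w) (f : V ↪ W) :
    #{g : V ↪ W | F.map f = F.map g} ≤ Nat.card (F ≃g F) := by
  have := Fintype.ofFinite (F ≃g F)
  calc #{g : V ↪ W | F.map f = F.map g}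
      ≤ #(univ.image fun σ : F ≃g F => σ.toEquiv.toEmbedding.trans f) := by
        refine card_le_card fun g hg => ?_
        obtain ⟨σ, hσ⟩ := exists_iso_apply_eq_of_map_eq hF (mem_filter.1 hg).2
        exact mem_image.2 ⟨σ, mem_univ _, DFunLike.ext _ _ hσ⟩
    _ ≤ Nat.card (F ≃g F) := card_image_le.trans_eq (Nat.card_eq_fintype_card).symm

theorem card_filter_embedding_apply_eq_le [Fintype V] [Fintype W] {x y : V} (hxy : x ≠ y)
    (a b : W) : #{f : V ↪ W | f x = a ∧ f y = b} ≤ Fintype.card W ^ (Fintype.card V - 2) := by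
  have hcard : Fintype.card {z // z ∉ ({x, y} : Finset V)} = Fintype.card V - 2 := by
    rw [Fintype.card_subtype_compl, Fintype.card_coe, card_pair hxy]
  rw [← hcard, ← Fintype.card_fun, ← card_univ]
  refine card_le_card_of_injOn (fun f z => f z) (fun _ _ => mem_univ _) ?_
  intro f hf g hg hfg
  simp only [coe_filter, mem_univ, true_and, Set.mem_ofPred_eq] at hf hg
  ext z
  by_cases hz : z ∈ ({x, y} : Finset V)
  · rcases mem_insert.1 hz with rfl | hz
    · rw [hf.1, hg.1]
    · rw [mem_singleton.1 hz, hf.2, hg.2]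
  · exact congrFun hfg ⟨z, hz⟩

theorem card_filter_map_adj_le [Fintype V] [Fintype W] (F : SimpleGraph V) (a b : W) :
    #{f : V ↪ W | (F.map f).Adj a b} ≤
      Fintype.card V ^ 2 * Fintype.card W ^ (Fintype.card V - 2) := by
  calc #{f : V ↪ W | (F.map f).Adj a b}
      ≤ #((univ.filter fun q : V × V => F.Adj q.1 q.2).biUnion
          fun q => {f : V ↪ W | f q.1 = a ∧ f q.2 = b}) := by
        refine card_le_card fun f hf => ?_
        obtain ⟨x, y, hxy, rfl, rfl⟩ := (map_adj f F a b).1 (mem_filter.1 hf).2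
        exact mem_biUnion.2 ⟨(x, y), by simpa using hxy, by simp⟩
    _ ≤ #(univ.filter fun q : V × V => F.Adj q.1 q.2) * Fintype.card W ^ (Fintype.card V - 2) :=
        card_biUnion_le_card_mul _ _ _ fun q hq =>
          card_filter_embedding_apply_eq_le (mem_filter.1 hq).2.ne a b
    _ ≤ Fintype.card V ^ 2 * Fintype.card W ^ (Fintype.card V - 2) := by
        gcongr
        exact (card_filter_le _ _).trans_eq (by simp [sq])

theorem card_edgeFinset_map_erase [Fintype V] [Fintype W] [DecidableEq W] (F : SimpleGraph V)
    {f : V ↪ W} [Fintype (F.map f).edgeSet] {a b : W} (hab : (F.map f).Adj a b) :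
    #((F.map f).edgeFinset.erase s(a,b)) = #F.edgeFinset - 1 := by
  rw [card_erase_of_mem ((F.map f).mem_edgeFinset.2 hab)]
  convert congrArg (· - 1) (card_edgeFinset_map f F)

theorem eq_of_edgeFinset_erase_eq [DecidableEq W] {H₁ H₂ : SimpleGraph W} [Fintype H₁.edgeSet]
    [Fintype H₂.edgeSet] {e : Sym2 W} (h₁ : e ∈ H₁.edgeSet) (h₂ : e ∈ H₂.edgeSet)
    (h : H₁.edgeFinset.erase e = H₂.edgeFinset.erase e) : H₁ = H₂ := by
  rw [← edgeFinset_inj, ← insert_erase (mem_edgeFinset.2 h₁),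
    ← insert_erase (mem_edgeFinset.2 h₂), h]

end SimpleGraph

section ErdosRenyi

variable {n : ℕ} (p : ℝ)

theorem ERexp_sum {ι : Type*} (s : Finset ι) (h : ι → SimpleGraph (Fin n) → ℝ) :
    ERexp n p (fun G => ∑ x ∈ s, h x G) = ∑ x ∈ s, ERexp n p (h x) := by
  simp only [ERexp, mul_sum]
  exact sum_comm

theorem ERexp_div_const (h : SimpleGraph (Fin n) → ℝ) (c : ℝ) :
    ERexp n p (fun G => h G / c) = ERexp n p h / c := by
  simp only [ERexp, mul_div_assoc', sum_div]

theorem edgeInd_fromEdgeSet (ω : Sym2 (Fin n) → Bool) {e : Sym2 (Fin n)} (he : ¬ e.IsDiag) :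
    edgeInd (SimpleGraph.fromEdgeSet {e | ω e = true}) p e = (if ω e then 1 else 0) - p := by
  simp [edgeInd, he]

theorem ERexp_prod_edgeInd_pow {s : Finset (Sym2 (Fin n))} (hs : ∀ e ∈ s, ¬ e.IsDiag)
    (m : Sym2 (Fin n) → ℕ) :
    ERexp n p (fun G => ∏ e ∈ s, edgeInd G p e ^ m e) =
      ∏ e ∈ s, (p * (1 - p) ^ m e + (1 - p) * (-p) ^ m e) := by
  let w : Sym2 (Fin n) → Bool → ℝ := fun e b =>
    (if b then p else 1 - p) * if e ∈ s then ((if b then 1 else 0) - p) ^ m e else 1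
  have hterm : ∀ ω : Sym2 (Fin n) → Bool,
      (∏ e, if ω e then p else 1 - p) *
        ∏ e ∈ s, edgeInd (SimpleGraph.fromEdgeSet {e | ω e = true}) p e ^ m e =
      ∏ e, w e (ω e) := by
    intro ω
    rw [prod_mul_distrib, ← Fintype.prod_ite_mem s]
    congr 2 with e
    by_cases he : e ∈ s
    · simp only [he, if_true, edgeInd_fromEdgeSet p ω (hs e he)]
    · simp only [he, if_false]
  have hfactor : ∀ e,
      ∑ b, w e b = if e ∈ s then p * (1 - p) ^ m e + (1 - p) * (-p) ^ m e else 1 := by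
    intro e
    by_cases he : e ∈ s <;> simp [w, he]
  -- the weight of `ω` factors over the pairs, so the sum over `ω` is a product of one-pair sums
  simp only [ERexp, hterm]
  rw [← Fintype.prod_sum, Fintype.prod_congr _ _ hfactor, Fintype.prod_ite_mem]

theorem ERexp_prod_edgeInd_eq_zero {s : Finset (Sym2 (Fin n))} (hs : ∀ e ∈ s, ¬ e.IsDiag)
    (hne : s.Nonempty) : ERexp n p (fun G => ∏ e ∈ s, edgeInd G p e) = 0 := by
  have h := ERexp_prod_edgeInd_pow p hs fun _ => 1
  simp only [pow_one] at h
  obtain ⟨e, he⟩ := hne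
  exact h.trans (prod_eq_zero he (by ring))

theorem ERexp_prod_edgeInd_mul_prod_edgeInd {A B : Finset (Sym2 (Fin n))}
    (hA : ∀ e ∈ A, ¬ e.IsDiag) (hB : ∀ e ∈ B, ¬ e.IsDiag) :
    ERexp n p (fun G => (∏ e ∈ A, edgeInd G p e) * ∏ e ∈ B, edgeInd G p e) =
      if A = B then (p * (1 - p)) ^ #A else 0 := by
  have hAB : ∀ e ∈ A ∪ B, ¬ e.IsDiag := fun e he => (mem_union.1 he).elim (hA e) (hB e)
  simp only [prod_mul_prod_eq_prod_union_pow]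
  rw [ERexp_prod_edgeInd_pow p hAB]
  split_ifs with h
  · subst h
    rw [union_self, ← prod_const]
    refine prod_congr rfl fun e he => ?_
    simp only [he, if_true]
    ring
  · obtain ⟨e, he⟩ : ∃ e, ¬ (e ∈ A ↔ e ∈ B) := by
      by_contra! h'
      exact h (ext h')
    refine prod_eq_zero (i := e) (mem_union.2 (by tauto)) ?_
    have hmult : ((if e ∈ A then 1 else 0) + if e ∈ B then 1 else 0) = 1 := by
      by_cases heA : e ∈ A <;> by_cases heB : e ∈ B <;> simp_all
    rw [hmult]
    ring

theorem ERexp_sq_sum_prod_edgeInd {ι : Type*} (T : Finset ι) (A : ι → Finset (Sym2 (Fin n)))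
    (hA : ∀ x ∈ T, ∀ e ∈ A x, ¬ e.IsDiag) :
    ERexp n p (fun G => (∑ x ∈ T, ∏ e ∈ A x, edgeInd G p e) ^ 2) =
      ∑ x ∈ T, #{y ∈ T | A x = A y} * (p * (1 - p)) ^ #(A x) := by
  simp only [sq, sum_mul_sum, ERexp_sum]
  refine sum_congr rfl fun x hx => ?_
  rw [sum_congr rfl fun y hy => ERexp_prod_edgeInd_mul_prod_edgeInd p (hA x hx) (hA y hy),
    ← sum_filter, sum_const, nsmul_eq_mul]

end ErdosRenyi

section EdgeToggle

variable {n : ℕ} (p : ℝ)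

theorem edgeInd_sup_fromEdgeSet_of_ne (G : SimpleGraph (Fin n)) {i j : Fin n} {e : Sym2 (Fin n)}
    (he : e ≠ s(i,j)) :
    edgeInd (G ⊔ SimpleGraph.fromEdgeSet {s(i,j)}) p e = edgeInd G p e := by
  simp [edgeInd, he]

theorem edgeInd_deleteEdges_of_ne (G : SimpleGraph (Fin n)) {i j : Fin n} {e : Sym2 (Fin n)}
    (he : e ≠ s(i,j)) : edgeInd (G.deleteEdges {s(i,j)}) p e = edgeInd G p e := by
  simp [edgeInd, he]

theorem prod_edgeInd_sup_sub_prod_edgeInd_deleteEdges (G H : SimpleGraph (Fin n))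
    [Fintype H.edgeSet] (i j : Fin n) :
    ∏ e ∈ H.edgeFinset, edgeInd (G ⊔ SimpleGraph.fromEdgeSet {s(i,j)}) p e -
        ∏ e ∈ H.edgeFinset, edgeInd (G.deleteEdges {s(i,j)}) p e =
      if H.Adj i j then ∏ e ∈ H.edgeFinset.erase s(i,j), edgeInd G p e else 0 := by
  split_ifs with hij
  · have hmem : s(i,j) ∈ H.edgeFinset := H.mem_edgeFinset.2 hij
    rw [← mul_prod_erase _ _ hmem, ← mul_prod_erase _ _ hmem,
      prod_congr rfl fun e he => edgeInd_sup_fromEdgeSet_of_ne p G (ne_of_mem_erase he),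
      prod_congr rfl fun e he => edgeInd_deleteEdges_of_ne p G (ne_of_mem_erase he)]
    have hadd : edgeInd (G ⊔ SimpleGraph.fromEdgeSet {s(i,j)}) p s(i,j) = 1 - p := by
      simp [edgeInd, hij.ne]
    have hdel : edgeInd (G.deleteEdges {s(i,j)}) p s(i,j) = -p := by simp [edgeInd]
    rw [hadd, hdel]
    ring
  · rw [sub_eq_zero]
    refine prod_congr rfl fun e he => ?_
    have hne : e ≠ s(i,j) := by rintro rfl; exact hij (H.mem_edgeFinset.1 he)
    rw [edgeInd_sup_fromEdgeSet_of_ne p G hne, edgeInd_deleteEdges_of_ne p G hne]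

theorem Sij_eq_sum {t : ℕ} (G : SimpleGraph (Fin n)) (F : SimpleGraph (Fin t)) (i j : Fin n) :
    Sij G p F i j = (∑ f ∈ {f : Fin t ↪ Fin n | (F.map f).Adj i j},
        ∏ e ∈ (F.map f).edgeFinset.erase s(i,j), edgeInd G p e) / Nat.card (F ≃g F) := by
  have hcopy : ∀ (G' : SimpleGraph (Fin n)) (f : Fin t ↪ Fin n),
      ∏ e ∈ F.edgeFinset, edgeInd G' p (e.map f) =
        ∏ e ∈ (F.map f).edgeFinset, edgeInd G' p e := by
    intro G' f
    refine (prod_map F.edgeFinset f.sym2Map (edgeInd G' p)).symm.trans ?_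
    congr 1
    convert (SimpleGraph.edgeFinset_map f F).symm
  simp only [Sij, Ssum, hcopy, div_sub_div_same, ← sum_sub_distrib, sum_filter]
  congr 1
  exact sum_congr rfl fun f _ => by convert prod_edgeInd_sup_sub_prod_edgeInd_deleteEdges p G _ i j

variable {t : ℕ} {F : SimpleGraph (Fin t)} (i j : Fin n)

theorem ERexp_Sij_eq_zero (hF : 2 ≤ #F.edgeFinset) : ERexp n p (fun G => Sij G p F i j) = 0 := by
  have hA : ∀ f ∈ ({f : Fin t ↪ Fin n | (F.map f).Adj i j} : Finset _),
      ((F.map f).edgeFinset.erase s(i,j)).Nonempty := fun f hf => by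
    rw [← card_pos, F.card_edgeFinset_map_erase (mem_filter.1 hf).2]
    omega
  simp only [Sij_eq_sum, ERexp_div_const, ERexp_sum]
  rw [sum_eq_zero fun f hf => ERexp_prod_edgeInd_eq_zero p
    (fun e he => SimpleGraph.not_isDiag_of_mem_edgeFinset (mem_of_mem_erase he)) (hA f hf),
    zero_div]

theorem ERexp_Sij_sq_le (hp0 : 0 ≤ p) (hp1 : p ≤ 1) (hF : ∀ v, ∃ w, F.Adj v w) :
    ERexp n p (fun G => Sij G p F i j ^ 2) ≤
      #{f : Fin t ↪ Fin n | (F.map f).Adj i j} * p ^ (#F.edgeFinset - 1) := by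
  set T : Finset (Fin t ↪ Fin n) := {f | (F.map f).Adj i j}
  set A : (Fin t ↪ Fin n) → Finset (Sym2 (Fin n)) := fun f => (F.map f).edgeFinset.erase s(i,j)
  set c : ℝ := (Nat.card (F ≃g F) : ℝ)
  have hc : 1 ≤ c := Nat.one_le_cast.2 Nat.card_pos
  have hfiber : ∀ f ∈ T, (#{g ∈ T | A f = A g} : ℝ) ≤ c := fun f hf => by
    refine Nat.cast_le.2 ((card_le_card fun g hg => ?_).trans
      (F.card_filter_map_eq_le_card_iso hF f))
    obtain ⟨hgT, hfg⟩ := mem_filter.1 hg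
    exact mem_filter.2 ⟨mem_univ _, SimpleGraph.eq_of_edgeFinset_erase_eq (e := s(i,j))
      (mem_filter.1 hf).2 (mem_filter.1 hgT).2 hfg⟩
  have hweight : (p * (1 - p)) ^ (#F.edgeFinset - 1) ≤ p ^ (#F.edgeFinset - 1) :=
    pow_le_pow_left₀ (by nlinarith) (by nlinarith) _
  calc ERexp n p (fun G => Sij G p F i j ^ 2)
      = (∑ f ∈ T, #{g ∈ T | A f = A g} * (p * (1 - p)) ^ (#F.edgeFinset - 1)) / c ^ 2 := by
        simp only [Sij_eq_sum, div_pow, ERexp_div_const]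
        rw [ERexp_sq_sum_prod_edgeInd p T A
          fun f _ e he => SimpleGraph.not_isDiag_of_mem_edgeFinset (mem_of_mem_erase he)]
        congr 1
        exact sum_congr rfl fun f hf => by rw [F.card_edgeFinset_map_erase (mem_filter.1 hf).2]
    _ ≤ (∑ f ∈ T, c * p ^ (#F.edgeFinset - 1)) / c ^ 2 := by
        gcongr with f hf
        exact hfiber f hf
    _ = #T * p ^ (#F.edgeFinset - 1) / c := by
        rw [sum_const, nsmul_eq_mul]
        field_simp
    _ ≤ #T * p ^ (#F.edgeFinset - 1) := div_le_self (by positivity) hc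

end EdgeToggle

theorem ERexp_Sij_general {n t k : ℕ} (p : ℝ) (hp0 : 0 < p) (hp1 : p < 1)
    (F : SimpleGraph (Fin t)) (hiso : ∀ v : Fin t, ∃ w, F.Adj v w)
    (ht3 : 3 ≤ t) (htk : t ≤ k) (i j : Fin n) :
    ERexp n p (fun G => Sij G p F i j) = 0 ∧
    ERexp n p (fun G => (Sij G p F i j) ^ 2) ≤
      (k : ℝ) ^ 2 * p ^ (F.edgeFinset.card - 1) * (n : ℝ) ^ (t - 2) := by
  have hF : 2 ≤ #F.edgeFinset :=
    F.two_le_card_edgeFinset_of_forall_exists_adj (by simpa using ht3) hiso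
  have hcover : #{f : Fin t ↪ Fin n | (F.map f).Adj i j} ≤ t ^ 2 * n ^ (t - 2) := by
    simpa using F.card_filter_map_adj_le (W := Fin n) i j
  refine ⟨ERexp_Sij_eq_zero p i j hF, (ERexp_Sij_sq_le p i j hp0.le hp1.le hiso).trans ?_⟩
  calc (#{f : Fin t ↪ Fin n | (F.map f).Adj i j} : ℝ) * p ^ (#F.edgeFinset - 1)
      ≤ (t ^ 2 * n ^ (t - 2) : ℕ) * p ^ (#F.edgeFinset - 1) := by gcongr
    _ ≤ (k : ℝ) ^ 2 * p ^ (#F.edgeFinset - 1) * (n : ℝ) ^ (t - 2) := by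
      push_cast
      rw [mul_right_comm]
      gcongr

/-- for `F` with no isolated vertices and `3 ≤ v(F) = t ≤ k`, and a fixed
pair `ij`, one has `E[S_{ij}(F,G(n,p))] = 0` and
`E[S_{ij}(F,G(n,p))²] ≤ k² p^{e(F)−1} n^{t−2}`. -/
theorem ERexp_Sij {n t k : ℕ} (p : ℝ) (hp0 : 0 < p) (hp1 : p < 1)
    (F : SimpleGraph (Fin t)) (hiso : ∀ v : Fin t, ∃ w, F.Adj v w)
    (ht3 : 3 ≤ t) (htk : t ≤ k) (i j : Fin n) (hij : i ≠ j) :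
    ERexp n p (fun G => Sij G p F i j) = 0 ∧
    ERexp n p (fun G => (Sij G p F i j) ^ 2) ≤
      (k : ℝ) ^ 2 * p ^ (F.edgeFinset.card - 1) * (n : ℝ) ^ (t - 2) :=
  ERexp_Sij_general p hp0 hp1 F hiso ht3 htk i j
end

section
/- For every integer k ≥ 2 there exists a constant c_k > 0 such that for every graph G on n ≥ k+1 vertices and every p ∈ (0,1), u_{k+1}(G,p) ≥ c_k · n · u_k(G,p), where u_k(G,p) = max over k-vertex graphs F of |N(F,G) − E[N(F,G(n,p))]|. -/
/-!
Call a vertex `v` of a graph `H` on `k + 1` vertices *`F`-deleting* if `H - v ≅ F`. Double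
counting pairs (a `(k+1)`-set `S` of vertices of `G`, an `F`-deleting vertex of `G[S]`) gives
`(n - k) N(F, G) = ∑_H c(F, H) N(H, G)`, the sum running over labelled graphs `H` on `k + 1`
vertices, where `c(F, H)` is the number of `F`-deleting vertices of `H` divided by the number of
labelled copies of `H`. The expectations `E N(·, G(n, p))` satisfy the same identity: deleting a
vertex of `G(k + 1, p)` leaves `G(k, p)`, and `#copies(F) · |Aut F| = k!`. Subtracting the two
identities, `(n - k) u_k ≤ (k + 1) 2^C(k+1,2) u_{k+1}`, and `n ≤ (k + 1)(n - k)` once `n > k`.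
-/

open scoped Classical

/-- `N(F,G)`: the number of induced subgraphs of `G` isomorphic to `F` (i.e. the number of
vertex subsets of `G` inducing a graph isomorphic to `F`). -/
noncomputable def Ncount {k n : ℕ} (F : SimpleGraph (Fin k)) (G : SimpleGraph (Fin n)) : ℕ :=
  (Finset.univ.filter fun s : Finset (Fin n) =>
    Nonempty ((G.induce (s : Set (Fin n))) ≃g F)).card

/-- `E[N(F,G(n,p))] = (n)_k/|Aut(F)| · p^{e(F)} (1−p)^{C(k,2)−e(F)}`, the expected number
of induced copies of a `k`-vertex graph `F` in the Erdős–Rényi random graph `G(n,p)`. -/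
noncomputable def expN (n k : ℕ) (p : ℝ) (F : SimpleGraph (Fin k)) : ℝ :=
  ((n.descFactorial k : ℝ) / (Nat.card (F ≃g F))) *
    p ^ F.edgeFinset.card * (1 - p) ^ (k.choose 2 - F.edgeFinset.card)

/-- `u_k(G,p) = max {|N(F,G) − E[N(F,G(n,p))]| : v(F) = k}`. -/
noncomputable def uK (k n : ℕ) (G : SimpleGraph (Fin n)) (p : ℝ) : ℝ :=
  ⨆ F : SimpleGraph (Fin k), |(Ncount F G : ℝ) - expN n k p F|

open Finset Fintype

theorem Fintype.card_compl_singleton_add_one {V : Type*} [Fintype V] [DecidableEq V] (w : V) :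
    card ({w}ᶜ : Set V) + 1 = card V := by
  rw [card_compl_set, @card_unique ({w} : Set V)]
  exact Nat.sub_add_cancel (card_pos_iff.2 ⟨w⟩)

namespace SimpleGraph

variable {V W U : Type*}

def Iso.isoCongrLeft {G : SimpleGraph V} {H : SimpleGraph W} (i : G ≃g H) (F : SimpleGraph U) :
    (G ≃g F) ≃ (H ≃g F) where
  toFun e := i.symm.trans e
  invFun e := i.trans e
  left_inv e := by ext; simp
  right_inv e := by ext; simp

def induceInduceIso (G : SimpleGraph V) {s u : Set V} {t : Set s} (h : ∀ x : s, x ∈ t ↔ ↑x ∈ u)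
    (hu : u ⊆ s) : (G.induce s).induce t ≃g G.induce u where
  toFun x := ⟨x.1.1, (h x.1).1 x.2⟩
  invFun y := ⟨⟨y.1, hu y.2⟩, (h _).2 y.2⟩
  map_rel_iff' := Iff.rfl

section deletion

variable [Fintype V]

noncomputable def deletionCount (F : SimpleGraph W) (H : SimpleGraph V) : ℕ :=
  #{v | Nonempty (H.induce {v}ᶜ ≃g F)}

theorem deletionCount_le_card (F : SimpleGraph W) (H : SimpleGraph V) :
    deletionCount F H ≤ card V :=
  card_filter_le _ _

theorem deletionCount_congr {V' : Type*} [Fintype V'] (F : SimpleGraph W) {H : SimpleGraph V}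
    {H' : SimpleGraph V'} (e : H ≃g H') : deletionCount F H = deletionCount F H' := by
  have key (v : V) : Nonempty (H.induce {v}ᶜ ≃g F) ↔ Nonempty (H'.induce {e v}ᶜ ≃g F) :=
    ((e.induce ((Set.bijOn_singleton.2 rfl).compl e.bijective)).isoCongrLeft F).nonempty_congr
  exact card_equiv e.toEquiv fun v => by simp [key]

theorem card_eq_of_deletionCount_ne_zero [DecidableEq V] [Fintype W] {F : SimpleGraph W}
    {H : SimpleGraph V} (h : deletionCount F H ≠ 0) : card V = card W + 1 := by
  obtain ⟨v, hv⟩ := card_ne_zero.1 h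
  obtain ⟨e⟩ := (mem_filter.1 hv).2
  rw [← card_compl_singleton_add_one v, Fintype.card_congr e.toEquiv]

end deletion

theorem deletionCount_induce [DecidableEq V] (F : SimpleGraph W) (G : SimpleGraph V)
    (s : Finset V) :
    deletionCount F (G.induce s) = #{v ∈ s | Nonempty (G.induce (s.erase v) ≃g F)} := by
  have key (v : (s : Set V)) : Nonempty ((G.induce s).induce {v}ᶜ ≃g F) ↔
      Nonempty (G.induce (s.erase v.1) ≃g F) :=
    ((G.induceInduceIso (u := s.erase v.1) (fun x => by
        simp only [Set.mem_compl_singleton_iff, coe_erase, Set.mem_sdiff, Set.mem_singleton_iff]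
        exact ⟨fun h => ⟨x.2, fun h' => h (Subtype.ext h')⟩, fun h h' => h.2 (congrArg _ h')⟩)
      (by simp)).isoCongrLeft F).nonempty_congr
  refine card_bij (fun v _ => v.1) (fun v hv => ?_) (fun v _ w _ h => Subtype.ext h)
    (fun v hv => ?_)
  · simp only [mem_filter, mem_univ, true_and] at hv ⊢
    exact ⟨v.2, (key v).1 hv⟩
  · simp only [mem_filter, mem_univ, true_and] at hv ⊢
    exact ⟨⟨v, hv.1⟩, (key ⟨v, hv.1⟩).2 hv.2, rfl⟩

noncomputable def labelledCopies (V : Type*) [Fintype V] [DecidableEq V] (F : SimpleGraph W) : ℕ :=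
  #{H : SimpleGraph V | Nonempty (H ≃g F)}

section labelled

variable [Fintype V] [DecidableEq V]

theorem labelledCopies_congr {W' : Type*} {F : SimpleGraph W} {F' : SimpleGraph W'} (e : F ≃g F') :
    labelledCopies V F = labelledCopies V F' :=
  congrArg card (filter_congr fun _ _ => ⟨fun ⟨i⟩ => ⟨i.trans e⟩, fun ⟨i⟩ => ⟨i.trans e.symm⟩⟩)

def comapFiberEquivIso (F : SimpleGraph W) (H : SimpleGraph V) :
    {σ : V ≃ W // F.comap σ.toEmbedding = H} ≃ (H ≃g F) where
  toFun σ := ⟨σ.1, by obtain ⟨σ, rfl⟩ := σ; exact Iff.rfl⟩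
  invFun e := ⟨e.toEquiv, by ext; exact e.map_adj_iff⟩

/-- Orbit–stabilizer, read off the fibres of `σ ↦ F.comap σ` on `V ≃ W`. -/
theorem labelledCopies_mul_card_aut [Fintype W] (F : SimpleGraph W) (h : card V = card W) :
    labelledCopies V F * Nat.card (F ≃g F) = (card V).factorial := by
  rw [← Fintype.card_equiv (Fintype.equivOfCardEq h), ← Nat.card_eq_fintype_card,
    Nat.card_congr (Equiv.sigmaFiberEquiv fun σ : V ≃ W => F.comap σ.toEmbedding).symm,
    Nat.card_sigma, labelledCopies, card_eq_sum_ones, sum_filter, sum_mul]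
  refine Fintype.sum_congr _ _ fun H => ?_
  rw [Nat.card_congr (comapFiberEquivIso F H)]
  split_ifs with hH
  · obtain ⟨i⟩ := hH
    rw [one_mul, Nat.card_congr (i.isoCongrLeft F)]
  · rw [zero_mul, @Nat.card_of_isEmpty _ (not_nonempty_iff.1 hH)]

theorem labelledCopies_pos [Fintype W] (F : SimpleGraph W) (h : card V = card W) :
    0 < labelledCopies V F :=
  Nat.pos_of_mul_pos_right ((labelledCopies_mul_card_aut F h).symm ▸ Nat.factorial_pos _)

theorem natCard_iso_self_pos (F : SimpleGraph V) : 0 < Nat.card (F ≃g F) :=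
  Nat.pos_of_mul_pos_left ((labelledCopies_mul_card_aut F rfl).symm ▸ Nat.factorial_pos _)

theorem sum_ite_iso {M : Type*} [AddCommMonoid M] (X : SimpleGraph W) {f : SimpleGraph V → M}
    {c : M} (hf : ∀ H : SimpleGraph V, Nonempty (H ≃g X) → f H = c) :
    ∑ H, (if Nonempty (H ≃g X) then f H else 0) = labelledCopies V X • c := by
  rw [← sum_filter, sum_congr rfl fun H hH => hf H (mem_filter.1 hH).2, sum_const]
  rfl

end labelled

section weight

variable [Fintype V]

/-- The probability of `H` in the random graph `G(V, p)`. -/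
noncomputable def edgeWeight (p : ℝ) (H : SimpleGraph V) : ℝ :=
  p ^ H.edgeSet.ncard * (1 - p) ^ ((card V).choose 2 - H.edgeSet.ncard)

theorem edgeWeight_congr {V' : Type*} [Fintype V'] (p : ℝ) {H : SimpleGraph V}
    {H' : SimpleGraph V'} (e : H ≃g H') : edgeWeight p H = edgeWeight p H' := by
  rw [edgeWeight, edgeWeight, Fintype.card_congr e.toEquiv, ← Nat.card_coe_set_eq,
    ← Nat.card_coe_set_eq, Nat.card_congr e.mapEdgeSet]

variable [DecidableEq V]

noncomputable def induceAndLink (w : V) (H : SimpleGraph V) :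
    SimpleGraph ({w}ᶜ : Set V) × Finset ({w}ᶜ : Set V) :=
  (H.induce {w}ᶜ, univ.filter fun v : ({w}ᶜ : Set V) => H.Adj w v)

theorem induceAndLink_injective (w : V) : Function.Injective (induceAndLink w) := by
  intro H H' h
  simp only [induceAndLink, Prod.mk.injEq, Finset.ext_iff, mem_filter, mem_univ, true_and] at h
  obtain ⟨hind, hlink⟩ := h
  ext x y
  rcases eq_or_ne x w with rfl | hx
  · rcases eq_or_ne y x with rfl | hy
    · simp
    · exact hlink ⟨y, hy⟩
  · rcases eq_or_ne y w with rfl | hy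
    · simpa [adj_comm] using hlink ⟨x, hx⟩
    · exact (congrArg (fun K : SimpleGraph ({w}ᶜ : Set V) => K.Adj ⟨x, hx⟩ ⟨y, hy⟩) hind).to_iff

theorem induceAndLink_surjective (w : V) : Function.Surjective (induceAndLink w) := by
  rintro ⟨H₀, T⟩
  refine ⟨fromRel fun x y => (∃ hx hy, H₀.Adj ⟨x, hx⟩ ⟨y, hy⟩) ∨ (x = w ∧ ∃ hy, ⟨y, hy⟩ ∈ T), ?_⟩
  simp only [induceAndLink, Prod.mk.injEq]
  constructor
  · ext ⟨x, hx⟩ ⟨y, hy⟩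
    simp only [comap_adj, Function.Embedding.subtype_apply, fromRel_adj]
    constructor
    · rintro ⟨-, (⟨_, _, h⟩ | ⟨rfl, -⟩) | (⟨_, _, h⟩ | ⟨rfl, -⟩)⟩
      · exact h
      · exact (hx rfl).elim
      · exact h.symm
      · exact (hy rfl).elim
    · intro h
      exact ⟨fun hxy => H₀.ne_of_adj h (Subtype.ext hxy), Or.inl (Or.inl ⟨hx, hy, h⟩)⟩
  · ext ⟨y, hy⟩
    simp only [mem_filter, mem_univ, true_and, fromRel_adj]
    constructor
    · rintro ⟨-, (⟨hw, -⟩ | ⟨_, h⟩) | (⟨-, hw, -⟩ | ⟨rfl, -⟩)⟩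
      · exact (hw rfl).elim
      · exact h
      · exact (hw rfl).elim
      · exact (hy rfl).elim
    · intro h
      exact ⟨fun hxy => hy hxy.symm, Or.inl (Or.inr ⟨hy, h⟩)⟩

theorem induceAndLink_bijective (w : V) : Function.Bijective (induceAndLink w) :=
  ⟨induceAndLink_injective w, induceAndLink_surjective w⟩

theorem card_induceAndLink_snd (w : V) (H : SimpleGraph V) :
    #(induceAndLink w H).2 = H.degree w := by
  rw [← card_neighborFinset_eq_degree, ← card_map (Function.Embedding.subtype _)]
  congr 1
  ext v
  simp only [induceAndLink, mem_map, mem_filter, mem_univ, true_and,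
    Function.Embedding.subtype_apply, mem_neighborFinset]
  exact ⟨fun ⟨_, h, hv⟩ => hv ▸ h, fun h => ⟨⟨v, h.ne'⟩, h, rfl⟩⟩

theorem ncard_edgeSet_induce_compl_add_degree (w : V) (H : SimpleGraph V) :
    (H.induce {w}ᶜ).edgeSet.ncard + H.degree w = H.edgeSet.ncard := by
  rw [Set.ncard_eq_toFinset_card', Set.ncard_eq_toFinset_card', ← edgeFinset,
    card_edgeFinset_induce_compl_singleton, card_edgeFinset_deleteIncidenceSet, ← edgeFinset,
    Nat.sub_add_cancel (H.degree_le_card_edgeFinset w)]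

theorem edgeWeight_eq_mul_induceAndLink (p : ℝ) (w : V) (H : SimpleGraph V) :
    edgeWeight p H = edgeWeight p (induceAndLink w H).1 *
      (p ^ #(induceAndLink w H).2 * (1 - p) ^ (card ({w}ᶜ : Set V) - #(induceAndLink w H).2)) := by
  have hE₀ : (H.induce {w}ᶜ).edgeSet.ncard ≤ (card ({w}ᶜ : Set V)).choose 2 := by
    rw [Set.ncard_eq_toFinset_card', ← edgeFinset]
    exact card_edgeFinset_le_card_choose_two
  have hd := H.degree_lt_card_verts w
  rw [← card_compl_singleton_add_one w] at hd
  rw [card_induceAndLink_snd, edgeWeight, edgeWeight, ← card_compl_singleton_add_one w,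
    ← ncard_edgeSet_induce_compl_add_degree w]
  simp only [induceAndLink]
  set m := card ({w}ᶜ : Set V)
  have hchoose : (m + 1).choose 2 = m.choose 2 + m := by
    rw [Nat.choose_succ_succ', Nat.choose_one_right, add_comm]
  rw [hchoose, show m.choose 2 + m - ((H.induce {w}ᶜ).edgeSet.ncard + H.degree w) =
    (m.choose 2 - (H.induce {w}ᶜ).edgeSet.ncard) + (m - H.degree w) by omega, pow_add, pow_add]
  ring

/-- Deleting a vertex `w` of `G(V, p)` leaves `G(V ∖ {w}, p)`. -/
theorem sum_mul_edgeWeight_induce_compl (p : ℝ) (w : V) (φ : SimpleGraph ({w}ᶜ : Set V) → ℝ) :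
    ∑ H : SimpleGraph V, φ (H.induce {w}ᶜ) * edgeWeight p H = ∑ H₀, φ H₀ * edgeWeight p H₀ := by
  let g : SimpleGraph ({w}ᶜ : Set V) × Finset ({w}ᶜ : Set V) → ℝ := fun x =>
    φ x.1 * edgeWeight p x.1 * (p ^ #x.2 * (1 - p) ^ (card ({w}ᶜ : Set V) - #x.2))
  calc _ = ∑ H : SimpleGraph V, g (induceAndLink w H) := by
        refine sum_congr rfl fun H _ => ?_
        rw [edgeWeight_eq_mul_induceAndLink p w H, ← mul_assoc]
        rfl
    _ = ∑ x, g x := Fintype.sum_bijective _ (induceAndLink_bijective w) _ _ fun _ => rfl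
    _ = _ := by
        simp only [g, Fintype.sum_prod_type, ← mul_sum, Fintype.sum_pow_mul_eq_add_pow,
          add_sub_cancel, one_pow, mul_one]

theorem sum_deletionCount_mul_edgeWeight [Fintype W] [DecidableEq W] (p : ℝ) (F : SimpleGraph W)
    (h : card V = card W + 1) :
    (∑ H : SimpleGraph V, (deletionCount F H : ℝ) * edgeWeight p H) * Nat.card (F ≃g F) =
      (card V).factorial * edgeWeight p F := by
  have hvertex (w : V) : (∑ H : SimpleGraph V,
      (if Nonempty (H.induce {w}ᶜ ≃g F) then (1 : ℝ) else 0) * edgeWeight p H) *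
        Nat.card (F ≃g F) = (card W).factorial * edgeWeight p F := by
    have hS : card ({w}ᶜ : Set V) = card W := by
      have := card_compl_singleton_add_one w
      omega
    rw [sum_mul_edgeWeight_induce_compl p w fun H₀ => if Nonempty (H₀ ≃g F) then 1 else 0]
    simp only [ite_mul, one_mul, zero_mul]
    rw [sum_ite_iso F fun H₀ ⟨e⟩ => edgeWeight_congr p e, nsmul_eq_mul, mul_right_comm,
      ← Nat.cast_mul, labelledCopies_mul_card_aut F hS, hS]
  calc _ = ∑ w : V, (∑ H : SimpleGraph V,
          (if Nonempty (H.induce {w}ᶜ ≃g F) then (1 : ℝ) else 0) * edgeWeight p H) *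
            Nat.card (F ≃g F) := by
        simp only [deletionCount, card_filter, Nat.cast_sum, Nat.cast_ite, Nat.cast_one,
          Nat.cast_zero, sum_mul]
        exact sum_comm
    _ = _ := by
        simp only [hvertex, sum_const, card_univ, nsmul_eq_mul, h, Nat.factorial_succ]
        push_cast
        ring

end weight

end SimpleGraph

open SimpleGraph

theorem sum_card_erase_iso_eq_mul_Ncount {n k : ℕ} (G : SimpleGraph (Fin n))
    (F : SimpleGraph (Fin k)) :
    ∑ s : Finset (Fin n), #{v ∈ s | Nonempty (G.induce (s.erase v) ≃g F)} =
      (n - k) * Ncount F G := by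
  have hk {t : Finset (Fin n)} (ht : Nonempty (G.induce t ≃g F)) : #t = k := by
    simpa using Fintype.card_congr ht.some.toEquiv
  have hRHS : (n - k) * Ncount F G =
      ∑ t ∈ univ.filter fun t : Finset (Fin n) => Nonempty (G.induce (t : Set (Fin n)) ≃g F),
        #tᶜ := by
    rw [Ncount, mul_comm, ← smul_eq_mul, ← sum_const]
    exact sum_congr rfl fun t ht => by rw [card_compl, Fintype.card_fin, hk (mem_filter.1 ht).2]
  rw [hRHS, ← card_sigma, ← card_sigma]
  refine card_nbij' (fun x => ⟨x.1.erase x.2, x.2⟩) (fun x => ⟨insert x.2 x.1, x.2⟩) ?_ ?_ ?_ ?_ <;>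
    rintro ⟨s, v⟩ hx <;>
    simp only [coe_sigma, Set.mem_sigma_iff, mem_coe, mem_filter, mem_univ, true_and, mem_compl,
      mem_erase, mem_insert] at hx ⊢
  · exact ⟨hx.2, fun h => h.1 rfl⟩
  · rw [erase_insert hx.2]
    exact ⟨Or.inl trivial, hx.1⟩
  · simp [insert_erase hx.1]
  · simp [erase_insert hx.2]

noncomputable def stepCoeff {k : ℕ} (F : SimpleGraph (Fin k)) (H : SimpleGraph (Fin (k + 1))) :
    ℝ :=
  deletionCount F H / labelledCopies (Fin (k + 1)) H

theorem stepCoeff_nonneg {k : ℕ} (F : SimpleGraph (Fin k)) (H : SimpleGraph (Fin (k + 1))) :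
    0 ≤ stepCoeff F H := by
  unfold stepCoeff
  positivity

theorem stepCoeff_le {k : ℕ} (F : SimpleGraph (Fin k)) (H : SimpleGraph (Fin (k + 1))) :
    stepCoeff F H ≤ k + 1 := by
  have ha : (1 : ℝ) ≤ labelledCopies (Fin (k + 1)) H := by
    exact_mod_cast labelledCopies_pos H rfl
  calc stepCoeff F H ≤ deletionCount F H := div_le_self (Nat.cast_nonneg _) ha
    _ ≤ k + 1 := by exact_mod_cast (deletionCount_le_card F H).trans (Fintype.card_fin _).le

theorem sum_stepCoeff_mul_Ncount {n k : ℕ} (G : SimpleGraph (Fin n)) (F : SimpleGraph (Fin k)) :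
    ∑ H, stepCoeff F H * Ncount H G = (n - k : ℕ) * Ncount F G := by
  have hclass (s : Finset (Fin n)) : ∑ H : SimpleGraph (Fin (k + 1)),
      (if Nonempty (H ≃g G.induce s) then stepCoeff F H else 0) = deletionCount F (G.induce s) := by
    rw [sum_ite_iso (G.induce s) (c := (deletionCount F (G.induce s) : ℝ) /
      labelledCopies (Fin (k + 1)) (G.induce s)) fun H ⟨e⟩ => by
        rw [stepCoeff, deletionCount_congr F e, labelledCopies_congr e], nsmul_eq_mul]
    refine mul_div_cancel_of_imp' fun h => ?_
    by_contra hd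
    have hs : card (Fin (k + 1)) = card (s : Set (Fin n)) := by
      rw [card_eq_of_deletionCount_ne_zero (F := F) (H := G.induce s) (by exact_mod_cast hd),
        Fintype.card_fin, Fintype.card_fin]
    exact (labelledCopies_pos _ hs).ne' (by exact_mod_cast h)
  calc _ = ∑ H : SimpleGraph (Fin (k + 1)), ∑ s : Finset (Fin n),
        (if Nonempty (H ≃g G.induce s) then stepCoeff F H else 0) := by
        refine sum_congr rfl fun H _ => ?_
        rw [Ncount, card_filter, Nat.cast_sum, mul_sum]
        refine sum_congr rfl fun s _ => ?_
        simp only [Nat.cast_ite, Nat.cast_one, Nat.cast_zero, mul_ite, mul_one, mul_zero]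
        exact if_congr ⟨fun ⟨e⟩ => ⟨e.symm⟩, fun ⟨e⟩ => ⟨e.symm⟩⟩ rfl rfl
    _ = ∑ s : Finset (Fin n), (deletionCount F (G.induce s) : ℝ) := by
        rw [sum_comm]
        exact sum_congr rfl fun s _ => hclass s
    _ = _ := by
        simp only [deletionCount_induce]
        exact_mod_cast sum_card_erase_iso_eq_mul_Ncount G F

theorem expN_eq_mul_edgeWeight (n k : ℕ) (p : ℝ) (F : SimpleGraph (Fin k)) :
    expN n k p F = n.descFactorial k / Nat.card (F ≃g F) * edgeWeight p F := by
  rw [expN, edgeWeight, Fintype.card_fin, Set.ncard_eq_toFinset_card', ← edgeFinset]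
  ring

theorem sum_stepCoeff_mul_expN (n k : ℕ) (p : ℝ) (F : SimpleGraph (Fin k)) :
    ∑ H, stepCoeff F H * expN n (k + 1) p H = (n - k : ℕ) * expN n k p F := by
  have hterm (H : SimpleGraph (Fin (k + 1))) : stepCoeff F H * expN n (k + 1) p H =
      n.descFactorial (k + 1) / (k + 1).factorial * (deletionCount F H * edgeWeight p H) := by
    have h := labelledCopies_mul_card_aut H rfl
    rw [Fintype.card_fin] at h
    have ha := labelledCopies_pos H rfl
    have hA := natCard_iso_self_pos H
    rw [stepCoeff, expN_eq_mul_edgeWeight, ← h]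
    push_cast
    field_simp
  have hsum := sum_deletionCount_mul_edgeWeight p F (V := Fin (k + 1)) (by simp)
  have hA := natCard_iso_self_pos F
  rw [Fintype.card_fin] at hsum
  rw [sum_congr rfl fun H _ => hterm H, ← mul_sum, expN_eq_mul_edgeWeight, Nat.descFactorial_succ,
    eq_div_of_mul_eq (by positivity) hsum]
  push_cast
  field_simp

theorem abs_sub_expN_le_uK {m n : ℕ} (G : SimpleGraph (Fin n)) (p : ℝ) (F : SimpleGraph (Fin m)) :
    |(Ncount F G : ℝ) - expN n m p F| ≤ uK m n G p :=
  le_ciSup (f := fun F => |(Ncount F G : ℝ) - expN n m p F|) (Set.finite_range _).bddAbove F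

theorem uK_nonneg {m n : ℕ} (G : SimpleGraph (Fin n)) (p : ℝ) : 0 ≤ uK m n G p :=
  (abs_nonneg _).trans (abs_sub_expN_le_uK G p ⊥)

theorem sub_mul_uK_le_uK_succ {n k : ℕ} (G : SimpleGraph (Fin n)) (p : ℝ) :
    ((n - k : ℕ) : ℝ) * uK k n G p ≤
      card (SimpleGraph (Fin (k + 1))) * (k + 1) * uK (k + 1) n G p := by
  rw [uK, Real.mul_iSup_of_nonneg (Nat.cast_nonneg _)]
  refine ciSup_le fun F => ?_
  calc ((n - k : ℕ) : ℝ) * |(Ncount F G : ℝ) - expN n k p F|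
      = |∑ H, stepCoeff F H * ((Ncount H G : ℝ) - expN n (k + 1) p H)| := by
        simp only [mul_sub, sum_sub_distrib]
        rw [sum_stepCoeff_mul_Ncount, sum_stepCoeff_mul_expN, ← mul_sub, abs_mul, Nat.abs_cast]
    _ ≤ ∑ H, stepCoeff F H * |(Ncount H G : ℝ) - expN n (k + 1) p H| := by
        refine (abs_sum_le_sum_abs _ _).trans_eq (sum_congr rfl fun H _ => ?_)
        rw [abs_mul, abs_of_nonneg (stepCoeff_nonneg F H)]
    _ ≤ ∑ _H : SimpleGraph (Fin (k + 1)), (k + 1) * uK (k + 1) n G p :=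
        sum_le_sum fun H _ => mul_le_mul (stepCoeff_le F H) (abs_sub_expN_le_uK G p H)
          (abs_nonneg _) (by positivity)
    _ = _ := by rw [sum_const, card_univ, nsmul_eq_mul, mul_assoc]

theorem uK_step_up_general (k : ℕ) :
    ∃ c : ℝ, 0 < c ∧ ∀ n : ℕ, k + 1 ≤ n → ∀ G : SimpleGraph (Fin n),
      ∀ p : ℝ, 0 < p → p < 1 →
      uK (k + 1) n G p ≥ c * n * uK k n G p := by
  set C : ℝ := card (SimpleGraph (Fin (k + 1))) * (k + 1)
  have hC : 0 < C := by positivity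
  refine ⟨(C * (k + 1))⁻¹, by positivity, fun n hn G p _ _ => ?_⟩
  have hn_le : (n : ℝ) ≤ (k + 1) * (n - k : ℕ) := by
    have : n ≤ (k + 1) * (n - k) := by nlinarith [Nat.sub_add_cancel (le_of_lt hn)]
    exact_mod_cast this
  calc (C * (k + 1))⁻¹ * n * uK k n G p
      ≤ (C * (k + 1))⁻¹ * ((k + 1) * (n - k : ℕ)) * uK k n G p := by
        gcongr
        exact uK_nonneg G p
    _ = C⁻¹ * ((n - k : ℕ) * uK k n G p) := by field_simp
    _ ≤ C⁻¹ * (C * uK (k + 1) n G p) :=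
        mul_le_mul_of_nonneg_left (sub_mul_uK_le_uK_succ G p) (by positivity)
    _ = uK (k + 1) n G p := inv_mul_cancel_left₀ hC.ne' _

/-- step-up lemma: for every `k ≥ 2` there is `c_k > 0` such that for every
graph `G` on `n ≥ k+1` vertices and every `p ∈ (0,1)`,
`u_{k+1}(G,p) ≥ c_k · n · u_k(G,p)`. -/
theorem uK_step_up (k : ℕ) (hk : 2 ≤ k) :
    ∃ c : ℝ, 0 < c ∧ ∀ n : ℕ, k + 1 ≤ n → ∀ G : SimpleGraph (Fin n),
      ∀ p : ℝ, 0 < p → p < 1 →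
      uK (k + 1) n G p ≥ c * n * uK k n G p :=
  uK_step_up_general k
end
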